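/- arXiv:2208.03978 — 3 statements merged into one kernel-verified Lean document; each statement's English description precedes it below -/
import Mathlib

section
/- The function B ↦ B/(a + |B|) from ℝ^{d×d} (equivalently ℝⁿ with the Euclidean norm) to itself is monotone for every a > 0: for all B₁, B₂, ⟨B₁/(a+|B₁|) − B₂/(a+|B₂|), B₁ − B₂⟩ ≥ 0. -/
open scoped RealInnerProductSpace

/-- The map B ↦ B/(a + |B|) on a real inner product space is monotone for a > 0. -/
theorem stmt_2 {V : Type*} [NormedAddCommGroup V] [InnerProductSpace ℝ V]
    (a : ℝ) (ha : 0 < a) (B₁ B₂ : V) :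
    0 ≤ ⟪(a + ‖B₁‖)⁻¹ • B₁ - (a + ‖B₂‖)⁻¹ • B₂, B₁ - B₂⟫ := by
  have hx : (0:ℝ) ≤ ‖B₁‖ := norm_nonneg _
  have hy : (0:ℝ) ≤ ‖B₂‖ := norm_nonneg _
  have h1 : (0:ℝ) < a + ‖B₁‖ := by linarith
  have h2 : (0:ℝ) < a + ‖B₂‖ := by linarith
  have hib : ⟪B₁, B₂⟫ ≤ ‖B₁‖ * ‖B₂‖ := real_inner_le_norm _ _
  rw [inner_sub_left, real_inner_smul_left, real_inner_smul_left, inner_sub_right,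
    inner_sub_right, real_inner_self_eq_norm_sq, real_inner_self_eq_norm_sq, real_inner_comm B₁ B₂]
  have p1 : (0:ℝ) < (a + ‖B₁‖)⁻¹ := inv_pos.mpr h1
  have p2 : (0:ℝ) < (a + ‖B₂‖)⁻¹ := inv_pos.mpr h2
  set t := ⟪B₁, B₂⟫ with ht
  have key : (a + ‖B₁‖)⁻¹ * (‖B₁‖ ^ 2 - t) - (a + ‖B₂‖)⁻¹ * (t - ‖B₂‖ ^ 2)
      = ((a + ‖B₂‖) * (‖B₁‖ ^ 2 - t) + (a + ‖B₁‖) * (‖B₂‖ ^ 2 - t))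
        * ((a + ‖B₁‖)⁻¹ * (a + ‖B₂‖)⁻¹) := by
    field_simp
    ring
  rw [key]
  apply mul_nonneg _ (mul_pos p1 p2).le
  nlinarith [sq_nonneg (‖B₁‖ - ‖B₂‖), mul_nonneg (add_nonneg hx hy) (sub_nonneg.mpr hib)]
end

section
/- Let A : V → V be a monotone map on a real inner product space V, i.e. ⟨A(x) − A(y), x − y⟩ ≥ 0 for all x, y. Suppose xₙ → x weakly in L²(Ω; V), A(xₙ) → χ weakly-* in L^∞(Ω; V), and limsup ∫ ⟨A(xₙ), xₙ⟩ ≤ ∫ ⟨χ, x⟩. Then for every y ∈ L²(Ω; V), ∫ ⟨χ − A(y), x − y⟩ ≥ 0 (Minty-type inequality). -/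
/-!
On a finite measure space `L^∞ ⊆ L² ⊆ L¹`, so all pairings involved are `L²` pairings.
For `z` with `z, A ∘ z ∈ L²`, monotonicity of `A` gives
`∫⟪A xₙ, z⟫ + ∫⟪A z, xₙ⟫ - ∫⟪A z, z⟫ ≤ ∫⟪A xₙ, xₙ⟫`. The left side converges to
`∫⟪χ, z⟫ + ∫⟪A z, x⟫ - ∫⟪A z, z⟫`, and the right side is bounded because weakly convergent
sequences in `L²` are bounded (Banach–Steinhaus), so taking `limsup` yields
`∫⟪χ - A z, x - z⟫ ≥ 0`. A general `y ∈ L²` is the limit of the truncations `y · 1{‖y‖ ≤ k}`,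
which `A` maps to bounded functions since `A` is continuous and `V` is finite-dimensional, and
dominated convergence passes the inequality to the limit.
-/

open MeasureTheory Filter Set Topology
open scoped RealInnerProductSpace ENNReal

section L2Pairing

variable {Ω : Type*} [MeasurableSpace Ω] {μ : Measure Ω}
  {V : Type*} [NormedAddCommGroup V] [InnerProductSpace ℝ V] {f g : Ω → V}

theorem MeasureTheory.MemLp.integral_inner_eq_inner_toLp (hf : MemLp f 2 μ) (hg : MemLp g 2 μ) :
    ∫ ω, ⟪f ω, g ω⟫ ∂μ = ⟪hf.toLp f, hg.toLp g⟫ := by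
  rw [L2.inner_def]
  refine integral_congr_ae ?_
  filter_upwards [hf.coeFn_toLp, hg.coeFn_toLp] with ω hfω hgω
  rw [hfω, hgω]

theorem MeasureTheory.MemLp.integrable_inner (hf : MemLp f 2 μ) (hg : MemLp g 2 μ) :
    Integrable (fun ω => ⟪f ω, g ω⟫) μ := by
  refine (L2.integrable_inner (hf.toLp f) (hg.toLp g)).congr ?_
  filter_upwards [hf.coeFn_toLp, hg.coeFn_toLp] with ω hfω hgω
  rw [hfω, hgω]

theorem MeasureTheory.MemLp.abs_integral_inner_le (hf : MemLp f 2 μ) (hg : MemLp g 2 μ) :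
    |∫ ω, ⟪f ω, g ω⟫ ∂μ| ≤ ‖hf.toLp f‖ * ‖hg.toLp g‖ := by
  rw [hf.integral_inner_eq_inner_toLp hg]
  exact abs_real_inner_le_norm _ _

theorem integral_inner_sub_sub {u v : Ω → V} (hf : MemLp f 2 μ) (hg : MemLp g 2 μ)
    (hu : MemLp u 2 μ) (hv : MemLp v 2 μ) :
    ∫ ω, ⟪f ω - g ω, u ω - v ω⟫ ∂μ = (∫ ω, ⟪f ω, u ω⟫ ∂μ) - (∫ ω, ⟪f ω, v ω⟫ ∂μ)
      - ((∫ ω, ⟪g ω, u ω⟫ ∂μ) - ∫ ω, ⟪g ω, v ω⟫ ∂μ) := by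
  have hfu := hf.integrable_inner hu
  have hfv := hf.integrable_inner hv
  have hgu := hg.integrable_inner hu
  have hgv := hg.integrable_inner hv
  simp_rw [inner_sub_left, inner_sub_right]
  rw [integral_sub (f := fun ω => ⟪f ω, u ω⟫ - ⟪f ω, v ω⟫)
    (g := fun ω => ⟪g ω, u ω⟫ - ⟪g ω, v ω⟫) (hfu.sub hfv) (hgu.sub hgv),
    integral_sub hfu hfv, integral_sub hgu hgv]

theorem exists_norm_toLp_le_of_forall_abs_integral_inner_le [CompleteSpace V] {ι : Type*}
    {f : ι → Ω → V} (hf : ∀ i, MemLp (f i) 2 μ)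
    (h : ∀ φ : Ω → V, MemLp φ 2 μ → ∃ C, ∀ i, |∫ ω, ⟪f i ω, φ ω⟫ ∂μ| ≤ C) :
    ∃ C, ∀ i, ‖(hf i).toLp (f i)‖ ≤ C := by
  obtain ⟨C, hC⟩ := banach_steinhaus (g := fun i => innerSL ℝ ((hf i).toLp (f i))) fun φ => by
    obtain ⟨C, hC⟩ := h φ (Lp.memLp φ)
    refine ⟨C, fun i => ?_⟩
    have hpair := (hf i).integral_inner_eq_inner_toLp (Lp.memLp φ)
    rw [Lp.toLp_coeFn] at hpair
    rw [innerSL_apply_apply, Real.norm_eq_abs, ← hpair]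
    exact hC i
  exact ⟨C, fun i => (innerSL_apply_norm ℝ _).symm.trans_le (hC i)⟩

theorem isBoundedUnder_le_integral_inner_of_tendsto [CompleteSpace V] {f g : ℕ → Ω → V}
    {f₀ g₀ : Ω → V} (hf : ∀ n, MemLp (f n) 2 μ) (hg : ∀ n, MemLp (g n) 2 μ)
    (hf_lim : ∀ φ : Ω → V, MemLp φ 2 μ →
      Tendsto (fun n => ∫ ω, ⟪f n ω, φ ω⟫ ∂μ) atTop (𝓝 (∫ ω, ⟪f₀ ω, φ ω⟫ ∂μ)))
    (hg_lim : ∀ φ : Ω → V, MemLp φ 2 μ →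
      Tendsto (fun n => ∫ ω, ⟪g n ω, φ ω⟫ ∂μ) atTop (𝓝 (∫ ω, ⟪g₀ ω, φ ω⟫ ∂μ))) :
    IsBoundedUnder (· ≤ ·) atTop (fun n => ∫ ω, ⟪f n ω, g n ω⟫ ∂μ) := by
  have bound_of_tendsto {h : ℕ → Ω → V} {h₀ : Ω → V} (hh : ∀ n, MemLp (h n) 2 μ)
      (hh_lim : ∀ φ : Ω → V, MemLp φ 2 μ →
        Tendsto (fun n => ∫ ω, ⟪h n ω, φ ω⟫ ∂μ) atTop (𝓝 (∫ ω, ⟪h₀ ω, φ ω⟫ ∂μ))) :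
      ∃ C, ∀ n, ‖(hh n).toLp (h n)‖ ≤ C :=
    exists_norm_toLp_le_of_forall_abs_integral_inner_le hh fun φ hφ => by
      obtain ⟨C, hC⟩ := (hh_lim φ hφ).abs.bddAbove_range
      exact ⟨C, fun n => hC ⟨n, rfl⟩⟩
  obtain ⟨Cf, hCf⟩ := bound_of_tendsto hf hf_lim
  obtain ⟨Cg, hCg⟩ := bound_of_tendsto hg hg_lim
  refine isBoundedUnder_of ⟨Cf * Cg, fun n => ?_⟩
  calc ∫ ω, ⟪f n ω, g n ω⟫ ∂μ ≤ |∫ ω, ⟪f n ω, g n ω⟫ ∂μ| := le_abs_self _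
    _ ≤ ‖(hf n).toLp (f n)‖ * ‖(hg n).toLp (g n)‖ := (hf n).abs_integral_inner_le (hg n)
    _ ≤ Cf * Cg := mul_le_mul (hCf n) (hCg n) (norm_nonneg _) ((norm_nonneg _).trans (hCf n))

end L2Pairing

section Minty

variable {Ω : Type*} [MeasurableSpace Ω] {μ : Measure Ω}
  {V : Type*} [NormedAddCommGroup V] [InnerProductSpace ℝ V] {A : V → V}

theorem integral_inner_add_sub_le_of_monotone (hAmono : ∀ u v : V, 0 ≤ ⟪A u - A v, u - v⟫)
    {u z : Ω → V} (hu : MemLp u 2 μ) (hAu : MemLp (fun ω => A (u ω)) 2 μ) (hz : MemLp z 2 μ)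
    (hAz : MemLp (fun ω => A (z ω)) 2 μ) :
    (∫ ω, ⟪A (u ω), z ω⟫ ∂μ) + (∫ ω, ⟪A (z ω), u ω⟫ ∂μ) - ∫ ω, ⟪A (z ω), z ω⟫ ∂μ
      ≤ ∫ ω, ⟪A (u ω), u ω⟫ ∂μ := by
  have h : 0 ≤ ∫ ω, ⟪A (u ω) - A (z ω), u ω - z ω⟫ ∂μ := integral_nonneg fun ω => hAmono _ _
  rw [integral_inner_sub_sub hAu hAz hu hz] at h
  linarith

theorem integral_inner_sub_nonneg_of_tendsto [CompleteSpace V]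
    (hAmono : ∀ u v : V, 0 ≤ ⟪A u - A v, u - v⟫)
    {xn : ℕ → Ω → V} {x χ : Ω → V} (hxn : ∀ n, MemLp (xn n) 2 μ)
    (hAxn : ∀ n, MemLp (fun ω => A (xn n ω)) 2 μ) (hx : MemLp x 2 μ) (hχ : MemLp χ 2 μ)
    (hweak : ∀ φ : Ω → V, MemLp φ 2 μ →
      Tendsto (fun n => ∫ ω, ⟪xn n ω, φ ω⟫ ∂μ) atTop (𝓝 (∫ ω, ⟪x ω, φ ω⟫ ∂μ)))
    (hweakA : ∀ φ : Ω → V, MemLp φ 2 μ →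
      Tendsto (fun n => ∫ ω, ⟪A (xn n ω), φ ω⟫ ∂μ) atTop (𝓝 (∫ ω, ⟪χ ω, φ ω⟫ ∂μ)))
    (hlimsup : limsup (fun n => ∫ ω, ⟪A (xn n ω), xn n ω⟫ ∂μ) atTop ≤ ∫ ω, ⟪χ ω, x ω⟫ ∂μ)
    {z : Ω → V} (hz : MemLp z 2 μ) (hAz : MemLp (fun ω => A (z ω)) 2 μ) :
    0 ≤ ∫ ω, ⟪χ ω - A (z ω), x ω - z ω⟫ ∂μ := by
  have hweak_Az : Tendsto (fun n => ∫ ω, ⟪A (z ω), xn n ω⟫ ∂μ) atTop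
      (𝓝 (∫ ω, ⟪A (z ω), x ω⟫ ∂μ)) := by
    simpa only [real_inner_comm (A _)] using hweak _ hAz
  have hlim := ((hweakA z hz).add hweak_Az).sub_const (∫ ω, ⟪A (z ω), z ω⟫ ∂μ)
  have hle : (∫ ω, ⟪χ ω, z ω⟫ ∂μ) + (∫ ω, ⟪A (z ω), x ω⟫ ∂μ) - (∫ ω, ⟪A (z ω), z ω⟫ ∂μ)
      ≤ ∫ ω, ⟪χ ω, x ω⟫ ∂μ := by
    rw [← hlim.limsup_eq]
    refine (limsup_le_limsup (Eventually.of_forall fun n => ?_) hlim.isCoboundedUnder_le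
      (isBoundedUnder_le_integral_inner_of_tendsto hAxn hxn hweakA hweak)).trans hlimsup
    exact integral_inner_add_sub_le_of_monotone hAmono (hxn n) (hAxn n) hz hAz
  rw [integral_inner_sub_sub hχ hAz hx hz]
  linarith

end Minty

section Truncation

variable {Ω : Type*} [MeasurableSpace Ω] {μ : Measure Ω}

theorem Continuous.comp_memLp_top {E F : Type*} [NormedAddCommGroup E] [ProperSpace E]
    [NormedAddCommGroup F] {A : E → F} (hA : Continuous A) {z : Ω → E} (hz : MemLp z ∞ μ) :
    MemLp (fun ω => A (z ω)) ∞ μ := by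
  obtain ⟨R, hR⟩ := eLpNormEssSup_lt_top_iff_isBoundedUnder.1 (by simpa using hz.2)
  obtain ⟨C, hC⟩ := (isCompact_closedBall (0 : E) R).exists_bound_of_continuousOn
    hA.continuousOn
  refine memLp_top_of_bound (hA.comp_aestronglyMeasurable hz.1) C ?_
  filter_upwards [hR] with ω hω
  exact hC _ (by simpa using NNReal.coe_le_coe.2 hω)

theorem MeasureTheory.AEStronglyMeasurable.exists_memLp_top_indicator {E : Type*}
    [NormedAddCommGroup E] {y : Ω → E} (hy : AEStronglyMeasurable y μ) :
    ∃ S : ℕ → Set Ω, (∀ k, MeasurableSet (S k)) ∧ (∀ ω, ∀ᶠ k in atTop, ω ∈ S k) ∧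
      ∀ k, MemLp ((S k).indicator y) ∞ μ := by
  have hS : ∀ k : ℕ, MeasurableSet {ω | ‖hy.mk y ω‖ ≤ k} := fun k =>
    measurableSet_le hy.stronglyMeasurable_mk.norm.measurable measurable_const
  refine ⟨fun k => {ω | ‖hy.mk y ω‖ ≤ k}, hS, fun ω => ?_, fun k => ?_⟩
  · filter_upwards [eventually_ge_atTop ⌈‖hy.mk y ω‖⌉₊] with k hk
    exact (Nat.le_ceil _).trans (Nat.cast_le.2 hk)
  · refine memLp_top_of_bound (hy.indicator (hS k)) k ?_
    filter_upwards [hy.ae_eq_mk] with ω hω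
    by_cases hωk : ω ∈ {ω | ‖hy.mk y ω‖ ≤ k}
    · simpa [indicator_of_mem hωk, hω] using hωk
    · simp [indicator_of_notMem hωk]

theorem tendsto_integral_apply_indicator {E G : Type*} [Zero E] [NormedAddCommGroup G]
    [NormedSpace ℝ G] {F : Ω → E → G} {y : Ω → E} {S : ℕ → Set Ω}
    (hS : ∀ k, MeasurableSet (S k)) (hSy : ∀ ω, ∀ᶠ k in atTop, ω ∈ S k)
    (hFy : Integrable (fun ω => F ω (y ω)) μ) (hF0 : Integrable (fun ω => F ω 0) μ) :
    Tendsto (fun k => ∫ ω, F ω ((S k).indicator y ω) ∂μ) atTop (𝓝 (∫ ω, F ω (y ω) ∂μ)) := by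
  classical
  have hpiece : ∀ k, (fun ω => F ω ((S k).indicator y ω))
      = (S k).piecewise (fun ω => F ω (y ω)) (fun ω => F ω 0) := fun k => funext fun ω => by
    by_cases hωk : ω ∈ S k <;> simp [hωk]
  refine tendsto_integral_of_dominated_convergence (fun ω => ‖F ω (y ω)‖ + ‖F ω 0‖)
    (fun k => ?_) (hFy.norm.add hF0.norm) (fun k => .of_forall fun ω => ?_)
    (.of_forall fun ω => tendsto_const_nhds.congr' ?_)
  · rw [hpiece]
    exact (Integrable.piecewise (hS k) hFy.integrableOn hF0.integrableOn).aestronglyMeasurable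
  · by_cases hωk : ω ∈ S k <;> simp [hωk]
  · filter_upwards [hSy ω] with k hωk
    simp [hωk]

end Truncation

/-- Minty-type inequality: if A is monotone, xₙ ⇀ x weakly in L², A(xₙ) ⇀* χ in L^∞ and
limsup ∫⟨A(xₙ), xₙ⟩ ≤ ∫⟨χ, x⟩, then ∫⟨χ − A(y), x − y⟩ ≥ 0 for all y ∈ L². -/
theorem stmt_3 {Ω : Type*} [MeasurableSpace Ω] (μ : Measure Ω) [IsFiniteMeasure μ]
    {V : Type*} [NormedAddCommGroup V] [InnerProductSpace ℝ V] [FiniteDimensional ℝ V]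
    (A : V → V) (hAcont : Continuous A)
    (hAmono : ∀ x y : V, 0 ≤ ⟪A x - A y, x - y⟫)
    (xn : ℕ → Ω → V) (x χ : Ω → V)
    (hxn : ∀ n, MemLp (xn n) 2 μ) (hx : MemLp x 2 μ)
    (hAxn : ∀ n, MemLp (fun ω => A (xn n ω)) ⊤ μ) (hχ : MemLp χ ⊤ μ)
    (hweak : ∀ φ : Ω → V, MemLp φ 2 μ →
      Tendsto (fun n => ∫ ω, ⟪xn n ω, φ ω⟫ ∂μ) atTop (nhds (∫ ω, ⟪x ω, φ ω⟫ ∂μ)))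
    (hweakstar : ∀ φ : Ω → V, Integrable φ μ →
      Tendsto (fun n => ∫ ω, ⟪A (xn n ω), φ ω⟫ ∂μ) atTop (nhds (∫ ω, ⟪χ ω, φ ω⟫ ∂μ)))
    (hlimsup : limsup (fun n => ∫ ω, ⟪A (xn n ω), xn n ω⟫ ∂μ) atTop ≤ ∫ ω, ⟪χ ω, x ω⟫ ∂μ) :
    ∀ y : Ω → V, MemLp y 2 μ → 0 ≤ ∫ ω, ⟪χ ω - A (y ω), x ω - y ω⟫ ∂μ := by
  have hχ2 : MemLp χ 2 μ := hχ.mono_exponent le_top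
  have hminty {z : Ω → V} (hz : MemLp z ∞ μ) : 0 ≤ ∫ ω, ⟪χ ω - A (z ω), x ω - z ω⟫ ∂μ :=
    integral_inner_sub_nonneg_of_tendsto hAmono hxn (fun n => (hAxn n).mono_exponent le_top)
      hx hχ2 hweak (fun φ hφ => hweakstar φ (hφ.integrable one_le_two)) hlimsup
      (hz.mono_exponent le_top) ((hAcont.comp_memLp_top hz).mono_exponent le_top)
  intro y hy
  by_cases hint : Integrable (fun ω => ⟪χ ω - A (y ω), x ω - y ω⟫) μ
  swap
  · rw [integral_undef hint] -- a non-integrable integrand has integral `0`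
  obtain ⟨S, hS, hSy, hyS⟩ := hy.1.exists_memLp_top_indicator
  have hF0 : Integrable (fun ω => ⟪χ ω - A 0, x ω - 0⟫) μ :=
    (hχ2.sub (memLp_const (A 0))).integrable_inner (hx.sub (memLp_const 0))
  exact ge_of_tendsto' (tendsto_integral_apply_indicator
    (F := fun ω v => ⟪χ ω - A v, x ω - v⟫) hS hSy hint hF0) fun k => hminty (hyS k)
end

section
/- Suppose fₙ ⇀ f weakly in L²(Ω) and gₙ = A(fₙ) ⇀ g weakly in L²(Ω), where A : ℝ → ℝ is continuous and monotone, and additionally limsupₙ ∫ fₙ gₙ ≤ ∫ f g. Then g = A(f) almost everywhere. -/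
/-!
Minty's trick. If `T` is monotone and hemicontinuous on a Hilbert space and
`0 ≤ ⟪y - T v, x - v⟫` for every `v`, then `T x = y`: take `v = x + t • (y - T x)`, divide by
`t > 0` and let `t → 0⁺` to get `‖y - T x‖² ≤ 0`. That inequality is the limit of the
monotonicity inequalities `0 ≤ ⟪T xₙ - T v, xₙ - v⟫`: every term is linear in `xₙ` or in `T xₙ`,
hence passes to the weak limit, except `⟪xₙ, T xₙ⟫`, which the `limsup` hypothesis controls.
Here `T` is the Nemytskii operator `u ↦ A ∘ u` on `L²`: linear growth of `A` keeps it in `L²`,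
monotonicity of `A` makes it monotone, and dominated convergence makes it hemicontinuous.
-/

open MeasureTheory Filter Topology
open scoped InnerProductSpace

section Minty

variable {H : Type*} [NormedAddCommGroup H] [InnerProductSpace ℝ H]

theorem exists_norm_le_of_tendsto_inner [CompleteSpace H] {x : ℕ → H} {x₀ : H}
    (hx : ∀ φ, Tendsto (fun n => ⟪x n, φ⟫_ℝ) atTop (𝓝 ⟪x₀, φ⟫_ℝ)) : ∃ C, ∀ n, ‖x n‖ ≤ C := by
  obtain ⟨C, hC⟩ := banach_steinhaus (g := fun n => innerSL ℝ (x n)) fun φ => by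
    obtain ⟨C, hC⟩ := (hx φ).norm.bddAbove_range
    exact ⟨C, fun n => hC (Set.mem_range_self n)⟩
  exact ⟨C, fun n => innerSL_apply_norm ℝ (x n) ▸ hC n⟩

theorem inner_sub_nonneg_of_limsup_le {T : H → H} (hmono : ∀ u v, 0 ≤ ⟪T u - T v, u - v⟫_ℝ)
    {x : ℕ → H} {x₀ y : H}
    (hx : ∀ φ, Tendsto (fun n => ⟪x n, φ⟫_ℝ) atTop (𝓝 ⟪x₀, φ⟫_ℝ))
    (hy : ∀ φ, Tendsto (fun n => ⟪T (x n), φ⟫_ℝ) atTop (𝓝 ⟪y, φ⟫_ℝ))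
    (hbdd : IsBoundedUnder (· ≤ ·) atTop fun n => ⟪x n, T (x n)⟫_ℝ)
    (hlimsup : limsup (fun n => ⟪x n, T (x n)⟫_ℝ) atTop ≤ ⟪x₀, y⟫_ℝ) (v : H) :
    0 ≤ ⟪y - T v, x₀ - v⟫_ℝ := by
  have hb : Tendsto (fun n => ⟪T (x n), v⟫_ℝ + ⟪x n, T v⟫_ℝ - ⟪T v, v⟫_ℝ) atTop
      (𝓝 (⟪y, v⟫_ℝ + ⟪x₀, T v⟫_ℝ - ⟪T v, v⟫_ℝ)) :=
    ((hy v).add (hx (T v))).sub_const _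
  have hba : ∀ n, ⟪T (x n), v⟫_ℝ + ⟪x n, T v⟫_ℝ - ⟪T v, v⟫_ℝ ≤ ⟪x n, T (x n)⟫_ℝ := fun n => by
    have := hmono (x n) v
    simp only [inner_sub_left, inner_sub_right, real_inner_comm (x n)] at this ⊢
    linarith [real_inner_comm (T v) (x n)]
  have hlim : ⟪y, v⟫_ℝ + ⟪x₀, T v⟫_ℝ - ⟪T v, v⟫_ℝ ≤ ⟪x₀, y⟫_ℝ :=
    hb.limsup_eq ▸ (limsup_le_limsup (Eventually.of_forall hba)
      hb.isBoundedUnder_ge.isCoboundedUnder_le hbdd).trans hlimsup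
  simp only [inner_sub_left, inner_sub_right, real_inner_comm x₀ y, real_inner_comm x₀ (T v)]
  linarith

theorem eq_of_forall_inner_sub_nonneg {T : H → H} {x₀ y : H}
    (hhemi : ∀ w, Tendsto (fun t : ℝ => ⟪T (x₀ + t • w), w⟫_ℝ) (𝓝[>] 0) (𝓝 ⟪T x₀, w⟫_ℝ))
    (hminty : ∀ v, 0 ≤ ⟪y - T v, x₀ - v⟫_ℝ) : T x₀ = y := by
  set w := y - T x₀
  have hle : ∀ t : ℝ, 0 < t → ⟪y, w⟫_ℝ ≤ ⟪T (x₀ + t • w), w⟫_ℝ := fun t ht => by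
    have := hminty (x₀ + t • w)
    rw [sub_add_cancel_left, inner_neg_right, inner_smul_right, inner_sub_left] at this
    nlinarith
  have : ⟪w, w⟫_ℝ ≤ 0 := by
    rw [inner_sub_left, sub_nonpos]
    exact ge_of_tendsto (hhemi w) (eventually_nhdsWithin_of_forall hle)
  exact (sub_eq_zero.mp (real_inner_self_nonpos.mp this)).symm

theorem eq_of_tendsto_inner_of_limsup_le [CompleteSpace H] {T : H → H}
    (hmono : ∀ u v, 0 ≤ ⟪T u - T v, u - v⟫_ℝ)
    (hhemi : ∀ u w, Tendsto (fun t : ℝ => ⟪T (u + t • w), w⟫_ℝ) (𝓝[>] 0) (𝓝 ⟪T u, w⟫_ℝ))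
    {x : ℕ → H} {x₀ y : H}
    (hx : ∀ φ, Tendsto (fun n => ⟪x n, φ⟫_ℝ) atTop (𝓝 ⟪x₀, φ⟫_ℝ))
    (hy : ∀ φ, Tendsto (fun n => ⟪T (x n), φ⟫_ℝ) atTop (𝓝 ⟪y, φ⟫_ℝ))
    (hlimsup : limsup (fun n => ⟪x n, T (x n)⟫_ℝ) atTop ≤ ⟪x₀, y⟫_ℝ) : T x₀ = y := by
  obtain ⟨C₁, hC₁⟩ := exists_norm_le_of_tendsto_inner hx
  obtain ⟨C₂, hC₂⟩ := exists_norm_le_of_tendsto_inner hy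
  -- without this bound the `limsup` in `hlimsup` could be the junk value `0`
  have hbdd : IsBoundedUnder (· ≤ ·) atTop fun n => ⟪x n, T (x n)⟫_ℝ :=
    isBoundedUnder_of ⟨C₁ * C₂, fun n => (real_inner_le_norm _ _).trans <|
      mul_le_mul (hC₁ n) (hC₂ n) (norm_nonneg _) ((norm_nonneg _).trans (hC₁ n))⟩
  exact eq_of_forall_inner_sub_nonneg (hhemi x₀)
    (inner_sub_nonneg_of_limsup_le hmono hx hy hbdd hlimsup)

end Minty

section Nemytskii

variable {Ω : Type*} [MeasurableSpace Ω] {μ : Measure Ω} {A : ℝ → ℝ} {c : ℝ}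

theorem nonneg_of_abs_le_mul_one_add_abs (hc : ∀ z, |A z| ≤ c * (1 + |z|)) : 0 ≤ c := by
  simpa using (abs_nonneg _).trans (hc 0)

theorem MeasureTheory.MemLp.comp_of_abs_le_mul_one_add_abs [IsFiniteMeasure μ] {p : ENNReal}
    (hA : Measurable A) (hc : ∀ z, |A z| ≤ c * (1 + |z|)) {u : Ω → ℝ} (hu : MemLp u p μ) :
    MemLp (fun ω => A (u ω)) p μ :=
  ((memLp_const (1 : ℝ)).add hu.norm).of_le_mul (c := c)
    (hA.comp_aemeasurable hu.aemeasurable).aestronglyMeasurable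
    (ae_of_all _ fun ω => by
      have h1 : (0 : ℝ) ≤ 1 + |u ω| := by positivity
      rw [Pi.add_apply, Real.norm_eq_abs, Real.norm_eq_abs, Real.norm_eq_abs, abs_of_nonneg h1]
      exact hc (u ω))

theorem MeasureTheory.L2.real_inner_def (u v : Lp ℝ 2 μ) : ⟪u, v⟫_ℝ = ∫ ω, u ω * v ω ∂μ := by
  simp only [L2.inner_def, Real.inner_apply]

theorem MeasureTheory.L2.real_inner_toLp_toLp {u v : Ω → ℝ} (hu : MemLp u 2 μ)
    (hv : MemLp v 2 μ) :
    ⟪hu.toLp u, hv.toLp v⟫_ℝ = ∫ ω, u ω * v ω ∂μ := by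
  rw [L2.real_inner_def]
  refine integral_congr_ae ?_
  filter_upwards [hu.coeFn_toLp, hv.coeFn_toLp] with ω h1 h2
  rw [h1, h2]

theorem MeasureTheory.L2.tendsto_inner_toLp_of_tendsto_integral_mul {u : ℕ → Ω → ℝ} {v : Ω → ℝ}
    (hu : ∀ n, MemLp (u n) 2 μ) (hv : MemLp v 2 μ)
    (h : ∀ φ, MemLp φ 2 μ →
      Tendsto (fun n => ∫ ω, u n ω * φ ω ∂μ) atTop (𝓝 (∫ ω, v ω * φ ω ∂μ)))
    (φ : Lp ℝ 2 μ) :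
    Tendsto (fun n => ⟪(hu n).toLp (u n), φ⟫_ℝ) atTop (𝓝 ⟪hv.toLp v, φ⟫_ℝ) := by
  rw [← Lp.toLp_coeFn φ (Lp.memLp φ)]
  simp only [L2.real_inner_toLp_toLp]
  exact h φ (Lp.memLp φ)

variable [IsFiniteMeasure μ] {p : ENNReal} (hA : Measurable A) (hc : ∀ z, |A z| ≤ c * (1 + |z|))

noncomputable def nemytskii (u : Lp ℝ p μ) : Lp ℝ p μ :=
  ((Lp.memLp u).comp_of_abs_le_mul_one_add_abs hA hc).toLp fun ω => A (u ω)

theorem coeFn_nemytskii (u : Lp ℝ p μ) : nemytskii hA hc u =ᵐ[μ] fun ω => A (u ω) :=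
  MemLp.coeFn_toLp _

theorem nemytskii_toLp {u : Ω → ℝ} (hu : MemLp u p μ) :
    nemytskii hA hc (hu.toLp u) =
      (hu.comp_of_abs_le_mul_one_add_abs hA hc).toLp fun ω => A (u ω) := by
  refine (MemLp.toLp_eq_toLp_iff _ _).mpr ?_
  filter_upwards [hu.coeFn_toLp] with ω h
  rw [h]

theorem inner_nemytskii_sub_nonneg (hmono : Monotone A) (u v : Lp ℝ 2 μ) :
    0 ≤ ⟪nemytskii hA hc u - nemytskii hA hc v, u - v⟫_ℝ := by
  rw [L2.real_inner_def]
  refine integral_nonneg_of_ae ?_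
  filter_upwards [Lp.coeFn_sub (nemytskii hA hc u) (nemytskii hA hc v), Lp.coeFn_sub u v,
    coeFn_nemytskii hA hc u, coeFn_nemytskii hA hc v] with ω hT hd hu hv
  simp only [hT, hd, Pi.sub_apply, hu, hv, Pi.zero_apply]
  rcases le_total (u ω) (v ω) with h | h
  · exact mul_nonneg_of_nonpos_of_nonpos (sub_nonpos.mpr (hmono h)) (sub_nonpos.mpr h)
  · exact mul_nonneg (sub_nonneg.mpr (hmono h)) (sub_nonneg.mpr h)

theorem inner_nemytskii_add_smul (u w : Lp ℝ 2 μ) (t : ℝ) :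
    ⟪nemytskii hA hc (u + t • w), w⟫_ℝ = ∫ ω, A (u ω + t * w ω) * w ω ∂μ := by
  rw [L2.real_inner_def]
  refine integral_congr_ae ?_
  filter_upwards [coeFn_nemytskii hA hc (u + t • w), Lp.coeFn_add u (t • w), Lp.coeFn_smul t w]
    with ω hT ha hs
  rw [hT, ha, Pi.add_apply, hs, Pi.smul_apply, smul_eq_mul]

theorem tendsto_inner_nemytskii_add_smul (hAc : Continuous A) (u w : Lp ℝ 2 μ) :
    Tendsto (fun t : ℝ => ⟪nemytskii hA hc (u + t • w), w⟫_ℝ) (𝓝 0)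
      (𝓝 ⟪nemytskii hA hc u, w⟫_ℝ) := by
  have hu := Lp.memLp u
  have hw := Lp.memLp w
  simp_rw [inner_nemytskii_add_smul hA hc]
  have h0 := inner_nemytskii_add_smul hA hc u w 0
  simp only [zero_smul, add_zero, zero_mul] at h0
  rw [h0]
  refine tendsto_integral_filter_of_dominated_convergence
    (fun ω => c * (1 + |u ω| + |w ω|) * |w ω|) ?_ ?_ ?_ ?_
  · exact Eventually.of_forall fun t => (((hu.add (hw.const_mul t)).comp_of_abs_le_mul_one_add_abs
      hA hc).aestronglyMeasurable.mul hw.aestronglyMeasurable)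
  · filter_upwards [Icc_mem_nhds neg_one_lt_zero zero_lt_one] with t ht
    refine ae_of_all _ fun ω => ?_
    have ht1 : |t| ≤ 1 := abs_le.mpr ht
    have hc0 := nonneg_of_abs_le_mul_one_add_abs hc
    rw [norm_mul, Real.norm_eq_abs, Real.norm_eq_abs]
    refine mul_le_mul_of_nonneg_right ?_ (abs_nonneg _)
    refine (hc _).trans (mul_le_mul_of_nonneg_left ?_ hc0)
    calc 1 + |u ω + t * w ω| ≤ 1 + (|u ω| + |t| * |w ω|) := by
          grw [abs_add_le, abs_mul]
      _ ≤ 1 + |u ω| + |w ω| := by nlinarith [abs_nonneg (w ω)]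
  · have hb : MemLp (fun ω => c * (1 + |u ω| + |w ω|)) 2 μ :=
      (((memLp_const (1 : ℝ)).add hu.norm).add hw.norm).const_mul c
    exact hb.integrable_mul hw.norm
  · refine ae_of_all _ fun ω => ?_
    refine ((hAc.tendsto _).comp ?_).mul_const _
    simpa using ((continuous_mul_const (w ω)).tendsto 0).const_add (u ω)

end Nemytskii

/-- Minty's trick, scalar case: if fₙ ⇀ f and A(fₙ) ⇀ g weakly in L²(Ω), with A continuous,
nondecreasing and of linear growth, and limsup ∫ fₙ A(fₙ) ≤ ∫ f g, then g = A(f) a.e. -/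
theorem stmt_16 {Ω : Type*} [MeasurableSpace Ω] (μ : Measure Ω) [IsFiniteMeasure μ]
    (A : ℝ → ℝ) (hAcont : Continuous A) (hAmono : Monotone A)
    (hAgrowth : ∃ c : ℝ, ∀ z : ℝ, |A z| ≤ c * (1 + |z|))
    (fn : ℕ → Ω → ℝ) (f g : Ω → ℝ)
    (hfn : ∀ n, MemLp (fn n) 2 μ) (hf : MemLp f 2 μ) (hg : MemLp g 2 μ)
    (hweakf : ∀ φ : Ω → ℝ, MemLp φ 2 μ →
      Tendsto (fun n => ∫ ω, fn n ω * φ ω ∂μ) atTop (nhds (∫ ω, f ω * φ ω ∂μ)))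
    (hweakg : ∀ φ : Ω → ℝ, MemLp φ 2 μ →
      Tendsto (fun n => ∫ ω, A (fn n ω) * φ ω ∂μ) atTop (nhds (∫ ω, g ω * φ ω ∂μ)))
    (hlimsup : limsup (fun n => ∫ ω, fn n ω * A (fn n ω) ∂μ) atTop ≤ ∫ ω, f ω * g ω ∂μ) :
    g =ᵐ[μ] fun ω => A (f ω) := by
  obtain ⟨c, hc⟩ := hAgrowth
  have hA := hAcont.measurable
  have hTf : nemytskii hA hc (hf.toLp f) = hg.toLp g := by
    refine eq_of_tendsto_inner_of_limsup_le (inner_nemytskii_sub_nonneg hA hc hAmono)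
      (fun u w => (tendsto_inner_nemytskii_add_smul hA hc hAcont u w).mono_left
        nhdsWithin_le_nhds) (L2.tendsto_inner_toLp_of_tendsto_integral_mul hfn hf hweakf) ?_ ?_
    · simp only [nemytskii_toLp]
      exact L2.tendsto_inner_toLp_of_tendsto_integral_mul _ hg hweakg
    · simpa only [nemytskii_toLp, L2.real_inner_toLp_toLp] using hlimsup
  rw [nemytskii_toLp, MemLp.toLp_eq_toLp_iff] at hTf
  exact hTf.symm
end
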